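/- For T ~ N(b̃, 1), λ ≥ 0 and b̃ ∈ ℝ, the risk of the hard-thresholding estimator satisfies E[(δ_{H,λ}(T) − b̃)²] = b̃²·(Φ(λ − b̃) − Φ(−λ − b̃)) + 1 − [Φ(λ − b̃) − Φ(−λ − b̃) − ((λ − b̃)·φ(λ − b̃) − (−λ − b̃)·φ(−λ − b̃))], where φ and Φ denote the standard normal density and cumulative distribution function. -/

import Mathlib

open MeasureTheory ProbabilityTheory Set Filter Topology
open scoped ENNReal NNReal

/-- The standard normal density `φ(x) = (2π)^{−1/2} exp(−x²/2)`. -/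
noncomputable def stdPhi (x : ℝ) : ℝ :=
  (Real.sqrt (2 * Real.pi))⁻¹ * Real.exp (-(x ^ 2) / 2)

/-- The standard normal cumulative distribution function `Φ(x) = ∫_{−∞}^x φ(u) du`. -/
noncomputable def stdCDF (x : ℝ) : ℝ :=
  ∫ u in Set.Iic x, stdPhi u

/-- Hard-thresholding estimator `δ_{H,λ}(t) = t·1{|t| > λ}`. -/
noncomputable def hardThresh (l t : ℝ) : ℝ := if l < |t| then t else 0

lemma stdPhi_eq_gaussian : stdPhi = gaussianPDFReal 0 1 := by
  funext x
  simp [stdPhi, gaussianPDFReal]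

lemma continuous_stdPhi : Continuous stdPhi := by
  unfold stdPhi
  continuity

lemma integrable_stdPhi : Integrable stdPhi := by
  rw [stdPhi_eq_gaussian]; exact integrable_gaussianPDFReal 0 1

lemma integral_stdPhi : ∫ x, stdPhi x = 1 := by
  rw [stdPhi_eq_gaussian]; exact integral_gaussianPDFReal_eq_one 0 one_ne_zero

lemma stdPhi_neg (x : ℝ) : stdPhi (-x) = stdPhi x := by simp [stdPhi]

lemma stdPhi_hasDerivAt (x : ℝ) : HasDerivAt stdPhi (-x * stdPhi x) x := by
  have h1 : HasDerivAt (fun y : ℝ => -(y ^ 2) / 2) (-x) x := by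
    have := ((hasDerivAt_pow 2 x).neg).div_const 2
    exact this.congr_deriv (by ring)
  have h2 := h1.exp
  have h3 := h2.const_mul ((Real.sqrt (2 * Real.pi))⁻¹)
  exact h3.congr_deriv (by unfold stdPhi; ring)

lemma stdCDF_hasDerivAt (x : ℝ) : HasDerivAt stdCDF (stdPhi x) x := by
  have h : ∀ y : ℝ, stdCDF 0 + ∫ u in (0:ℝ)..y, stdPhi u = stdCDF y := by
    intro y
    rw [← intervalIntegral.integral_Iic_sub_Iic integrable_stdPhi.integrableOn
      integrable_stdPhi.integrableOn]
    simp [stdCDF]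
  have hd : HasDerivAt (fun y => stdCDF 0 + ∫ u in (0:ℝ)..y, stdPhi u) (stdPhi x) x := by
    have := intervalIntegral.integral_hasDerivAt_right
      (continuous_stdPhi.intervalIntegrable 0 x)
      continuous_stdPhi.stronglyMeasurable.stronglyMeasurableAtFilter
      continuous_stdPhi.continuousAt
    exact this.const_add _
  exact hd.congr_of_eventuallyEq (Filter.Eventually.of_forall fun y => (h y).symm)

/-- Antiderivative of `x² φ(x)` is `Φ(x) − x φ(x)`. -/
lemma hasDerivAt_F (x : ℝ) :
    HasDerivAt (fun u => stdCDF u - u * stdPhi u) (x ^ 2 * stdPhi x) x := by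
  have h2 : HasDerivAt (fun u : ℝ => u * stdPhi u)
      (1 * stdPhi x + x * (-x * stdPhi x)) x :=
    (hasDerivAt_id x).mul (stdPhi_hasDerivAt x)
  have := (stdCDF_hasDerivAt x).sub h2
  exact this.congr_deriv (by ring)

lemma integrable_sq_stdPhi : Integrable (fun x : ℝ => x ^ 2 * stdPhi x) := by
  have h := integrable_rpow_mul_exp_neg_mul_sq (b := (1:ℝ)/2) (by norm_num) (s := 2)
    (by norm_num)
  have h2 : Integrable (fun x : ℝ => x ^ 2 * Real.exp (-(x ^ 2) / 2)) := by
    refine h.congr (Filter.Eventually.of_forall fun x => ?_)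
    show x ^ (2:ℝ) * Real.exp (-(1/2) * x ^ 2) = x ^ 2 * Real.exp (-(x ^ 2) / 2)
    have hx : x ^ (2:ℝ) = x ^ (2:ℕ) := by
      rw [← Real.rpow_natCast]; norm_num
    rw [hx, show -(1/2 : ℝ) * x ^ 2 = -(x ^ 2) / 2 by ring]
  have h3 := h2.const_mul ((Real.sqrt (2 * Real.pi))⁻¹)
  refine h3.congr (Filter.Eventually.of_forall fun x => ?_)
  unfold stdPhi; ring

lemma tendsto_mul_stdPhi_atTop : Tendsto (fun x : ℝ => x * stdPhi x) atTop (𝓝 0) := by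
  have h := rpow_mul_exp_neg_mul_sq_isLittleO_exp_neg (b := (1:ℝ)/2) (by norm_num) 1
  have hg : Tendsto (fun x : ℝ => Real.exp (-(1/2) * x)) atTop (𝓝 0) :=
    Real.tendsto_exp_atBot.comp (tendsto_id.const_mul_atTop_of_neg (by norm_num))
  have h0 : Tendsto (fun x : ℝ => x ^ (1:ℝ) * Real.exp (-(1/2) * x ^ 2)) atTop (𝓝 0) :=
    h.isBigO.trans_tendsto hg
  have h1 := h0.const_mul ((Real.sqrt (2 * Real.pi))⁻¹)
  rw [mul_zero] at h1
  refine h1.congr fun x => ?_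
  rw [Real.rpow_one]
  unfold stdPhi
  rw [show -(1/2) * x ^ 2 = -(x ^ 2) / 2 by ring]
  ring

lemma integral_sq_stdPhi : ∫ x, x ^ 2 * stdPhi x = 1 := by
  have h1 : Tendsto (fun R : ℝ => ∫ x in (-R)..R, x ^ 2 * stdPhi x) atTop
      (𝓝 (∫ x, x ^ 2 * stdPhi x)) :=
    intervalIntegral_tendsto_integral integrable_sq_stdPhi tendsto_neg_atTop_atBot tendsto_id
  have h2 : ∀ R : ℝ, ∫ x in (-R)..R, x ^ 2 * stdPhi x
      = (∫ x in (-R)..R, stdPhi x) - R * stdPhi R + (-R) * stdPhi (-R) := by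
    intro R
    rw [intervalIntegral.integral_eq_sub_of_hasDerivAt (fun x _ => hasDerivAt_F x)
      (((continuous_id.pow 2).mul continuous_stdPhi).intervalIntegrable _ _),
      ← intervalIntegral.integral_Iic_sub_Iic integrable_stdPhi.integrableOn
      integrable_stdPhi.integrableOn]
    show stdCDF R - R * stdPhi R - (stdCDF (-R) - -R * stdPhi (-R))
      = stdCDF R - stdCDF (-R) - R * stdPhi R + -R * stdPhi (-R)
    ring
  have h3 : Tendsto (fun R : ℝ => (∫ x in (-R)..R, stdPhi x) - R * stdPhi R
      + (-R) * stdPhi (-R)) atTop (𝓝 1) := by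
    have ha : Tendsto (fun R : ℝ => ∫ x in (-R)..R, stdPhi x) atTop (𝓝 1) := by
      have := intervalIntegral_tendsto_integral integrable_stdPhi tendsto_neg_atTop_atBot
        (tendsto_id (α := ℝ))
      rwa [integral_stdPhi] at this
    have hb := tendsto_mul_stdPhi_atTop
    have hc : Tendsto (fun R : ℝ => (-R) * stdPhi (-R)) atTop (𝓝 0) := by
      have := hb.neg
      rw [neg_zero] at this
      refine this.congr fun R => ?_
      rw [stdPhi_neg]; ring
    have := (ha.sub hb).add hc
    simpa using this
  have := h1.congr h2
  exact tendsto_nhds_unique this h3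

/-- **Closed form for the hard-thresholding risk.**  For `T ~ N(b̃, 1)` and `λ ≥ 0`,
`E[(δ_{H,λ}(T) − b̃)²] = b̃²·(Φ(λ−b̃) − Φ(−λ−b̃))
  + 1 − [Φ(λ−b̃) − Φ(−λ−b̃) − ((λ−b̃)·φ(λ−b̃) − (−λ−b̃)·φ(−λ−b̃))]`. -/
theorem stmt_14 (l b : ℝ) (hl : 0 ≤ l) :
    (∫ t, (hardThresh l t - b) ^ 2 ∂(gaussianReal b 1))
      = b ^ 2 * (stdCDF (l - b) - stdCDF (-l - b))
        + 1 - (stdCDF (l - b) - stdCDF (-l - b)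
          - ((l - b) * stdPhi (l - b) - (-l - b) * stdPhi (-l - b))) := by
  have hgauss : ∀ u : ℝ, gaussianPDFReal b 1 (u + b) = stdPhi u := by
    intro u
    simp [gaussianPDFReal, stdPhi]
  have hA : (∫ t, (hardThresh l t - b) ^ 2 ∂(gaussianReal b 1))
      = ∫ t, gaussianPDFReal b 1 t * (hardThresh l t - b) ^ 2 := by
    rw [gaussianReal_of_var_ne_zero b one_ne_zero]
    have hd : gaussianPDF b 1
        = fun x => ((Real.toNNReal (gaussianPDFReal b 1 x) : ℝ≥0) : ℝ≥0∞) := rfl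
    rw [hd, integral_withDensity_eq_integral_smul
      ((measurable_gaussianPDFReal b 1).real_toNNReal)]
    refine integral_congr_ae (Filter.Eventually.of_forall fun x => ?_)
    simp [NNReal.smul_def, Real.coe_toNNReal _ (gaussianPDFReal_nonneg b 1 x)]
  rw [hA]
  have hB : ∫ t, gaussianPDFReal b 1 t * (hardThresh l t - b) ^ 2
      = ∫ u, stdPhi u * (hardThresh l (u + b) - b) ^ 2 := by
    rw [← integral_add_right_eq_self
      (fun t => gaussianPDFReal b 1 t * (hardThresh l t - b) ^ 2) b]
    refine integral_congr_ae (Filter.Eventually.of_forall fun u => ?_)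
    simp only []
    rw [hgauss u]
  rw [hB]
  have hac : (-l - b : ℝ) ≤ l - b := by linarith
  have hdecomp : ∀ u : ℝ, stdPhi u * (hardThresh l (u + b) - b) ^ 2
      = u ^ 2 * stdPhi u
        + Set.indicator (Set.Icc (-l - b) (l - b))
          (fun u => (b ^ 2 - u ^ 2) * stdPhi u) u := by
    intro u
    by_cases hmem : u ∈ Set.Icc (-l - b) (l - b)
    · obtain ⟨h1, h2⟩ := hmem
      have habs : ¬ l < |u + b| := by
        rw [not_lt, abs_le]
        constructor <;> linarith
      simp only [Set.indicator_of_mem (Set.mem_Icc.mpr ⟨h1, h2⟩), hardThresh, if_neg habs]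
      ring
    · have habs : l < |u + b| := by
        by_contra hcon
        rw [not_lt, abs_le] at hcon
        exact hmem (Set.mem_Icc.mpr ⟨by linarith [hcon.1], by linarith [hcon.2]⟩)
      simp only [Set.indicator_of_notMem hmem, hardThresh, if_pos habs]
      ring
  have hcont : Continuous (fun u : ℝ => (b ^ 2 - u ^ 2) * stdPhi u) :=
    (continuous_const.sub (continuous_id.pow 2)).mul continuous_stdPhi
  have hint2 : Integrable (Set.indicator (Set.Icc (-l - b) (l - b))
      (fun u => (b ^ 2 - u ^ 2) * stdPhi u)) :=
    IntegrableOn.integrable_indicator hcont.integrableOn_Icc measurableSet_Icc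
  rw [integral_congr_ae (Filter.Eventually.of_forall hdecomp),
    integral_add integrable_sq_stdPhi hint2, integral_sq_stdPhi,
    integral_indicator measurableSet_Icc]
  have hIcc : ∫ u in Set.Icc (-l - b) (l - b), (b ^ 2 - u ^ 2) * stdPhi u
      = b ^ 2 * (stdCDF (l - b) - stdCDF (-l - b))
        - ((stdCDF (l - b) - stdCDF (-l - b))
          - ((l - b) * stdPhi (l - b) - (-l - b) * stdPhi (-l - b))) := by
    rw [integral_Icc_eq_integral_Ioc, ← intervalIntegral.integral_of_le hac]
    have hderiv : ∀ x ∈ Set.uIcc (-l - b) (l - b), HasDerivAt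
        (fun u => b ^ 2 * stdCDF u - (stdCDF u - u * stdPhi u))
        ((b ^ 2 - x ^ 2) * stdPhi x) x := by
      intro x _
      have := ((stdCDF_hasDerivAt x).const_mul (b ^ 2)).sub (hasDerivAt_F x)
      exact this.congr_deriv (by ring)
    rw [intervalIntegral.integral_eq_sub_of_hasDerivAt hderiv
      (hcont.intervalIntegrable _ _)]
    ring
  rw [hIcc]
  ring
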